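/- Let f : (0,∞) → (0,∞) be C¹ with γ₊ := -inf_{s>0} s·f'(s)/f(s) < 1 and γ₋ := -sup_{s>0} s·f'(s)/f(s) > -∞, and let F(s) = ∫₀ˢ f(t) dt (which is finite since γ₊ < 1). Then 1 - γ₊ ≤ inf_{s>0} s·f(s)/F(s) and sup_{s>0} s·f(s)/F(s) ≤ 1 - γ₋. -/

import Mathlib

/-!
The lower bound `-γ₊ f ≤ t f'` makes `t ↦ t ^ γ₊ f t` nondecreasing, so `f t = O(t ^ (-γ₊))` as
`t → 0⁺`. Since `γ₊ < 1`, this makes `f` integrable at `0` and forces `t f t → 0`, so that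
`s f s = ∫₀ˢ (t f t)' dt = ∫₀ˢ (f + t f')`; integrating `(1 - γ₊) f ≤ f + t f' ≤ (1 - γ₋) f`
gives both bounds.
-/

open Set intervalIntegral MeasureTheory Filter Topology

variable {f : ℝ → ℝ} {γ s : ℝ}

theorem monotoneOn_mul_rpow_of_neg_mul_le_mul_deriv (hf : DifferentiableOn ℝ f (Ioi 0))
    (h : ∀ t > 0, -γ * f t ≤ t * deriv f t) : MonotoneOn (fun t ↦ f t * t ^ γ) (Ioi 0) := by
  have hderiv : ∀ t ∈ Ioi (0 : ℝ), HasDerivAt (fun u ↦ f u * u ^ γ)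
      (t ^ (γ - 1) * (t * deriv f t + γ * f t)) t := by
    intro t (ht : 0 < t)
    refine ((hf.differentiableAt (Ioi_mem_nhds ht)).hasDerivAt.mul
      (Real.hasDerivAt_rpow_const (p := γ) (Or.inl ht.ne'))).congr_deriv ?_
    rw [show t ^ γ = t ^ (γ - 1) * t by rw [← Real.rpow_add_one ht.ne']; ring_nf]
    ring
  refine monotoneOn_of_hasDerivWithinAt_nonneg (convex_Ioi 0)
    (fun t ht ↦ (hderiv t ht).continuousAt.continuousWithinAt)
    (fun t ht ↦ (hderiv t (interior_subset ht)).hasDerivWithinAt) fun t ht ↦ ?_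
  rw [interior_Ioi] at ht
  have := h t ht
  exact mul_nonneg (Real.rpow_nonneg (le_of_lt ht) _) (by linarith)

theorem le_mul_rpow_neg_of_monotoneOn_mul_rpow (hmono : MonotoneOn (fun t ↦ f t * t ^ γ) (Ioi 0))
    {t : ℝ} (ht : 0 < t) (hts : t ≤ s) : f t ≤ f s * s ^ γ * t ^ (-γ) := by
  rw [Real.rpow_neg ht.le, ← div_eq_mul_inv, le_div_iff₀ (Real.rpow_pos_of_pos ht γ)]
  exact hmono ht (ht.trans_le hts) hts

variable {C : ℝ}

theorem intervalIntegrable_of_abs_le_rpow_neg (hγ : γ < 1) (hs : 0 ≤ s)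
    (hf : ContinuousOn f (Ioi 0)) (hC : ∀ t ∈ Ioc 0 s, |f t| ≤ C * t ^ (-γ)) :
    IntervalIntegrable f volume 0 s := by
  refine ((intervalIntegrable_rpow' (r := -γ) (by linarith)).const_mul C).mono_fun'
    ((hf.mono fun t ht ↦ ?_).aestronglyMeasurable measurableSet_uIoc) ?_
  · rw [uIoc_of_le hs] at ht; exact ht.1
  · rw [uIoc_of_le hs]
    exact (ae_restrict_iff' measurableSet_Ioc).2 (.of_forall hC)

theorem tendsto_mul_nhdsGT_zero_of_abs_le_rpow_neg (hγ : γ < 1) (hs : 0 < s)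
    (hC : ∀ t ∈ Ioc 0 s, |f t| ≤ C * t ^ (-γ)) :
    Tendsto (fun t ↦ t * f t) (𝓝[>] 0) (𝓝 0) := by
  have hlim : Tendsto (fun t : ℝ ↦ C * t ^ (1 - γ)) (𝓝[>] 0) (𝓝 0) := by
    have := (Real.continuousAt_rpow_const 0 (1 - γ) (Or.inr (by linarith))).tendsto
    rw [Real.zero_rpow (by linarith)] at this
    simpa using (this.const_mul C).mono_left nhdsWithin_le_nhds
  refine squeeze_zero_norm' ?_ hlim
  filter_upwards [Ioc_mem_nhdsGT hs] with t ht
  calc ‖t * f t‖ = t * |f t| := by rw [norm_mul, Real.norm_of_nonneg ht.1.le, Real.norm_eq_abs]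
    _ ≤ t * (C * t ^ (-γ)) := by gcongr; exacts [ht.1.le, hC t ht]
    _ = C * t ^ (1 - γ) := by
      rw [sub_eq_add_neg, Real.rpow_add ht.1, Real.rpow_one]; ring

theorem integral_add_mul_deriv_eq (hs : 0 < s) (hf : DifferentiableOn ℝ f (Ioi 0))
    (h0 : Tendsto (fun t ↦ t * f t) (𝓝[>] 0) (𝓝 0))
    (hint : IntervalIntegrable (fun t ↦ f t + t * deriv f t) volume 0 s) :
    ∫ t in 0..s, (f t + t * deriv f t) = s * f s := by
  have hderiv : ∀ t ∈ Ioi (0 : ℝ), HasDerivAt (fun u ↦ u * f u) (f t + t * deriv f t) t :=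
    fun t ht ↦
      ((hasDerivAt_id t).mul (hf.differentiableAt (Ioi_mem_nhds ht)).hasDerivAt).congr_deriv
        (by simp)
  rw [integral_eq_sub_of_hasDerivAt_of_tendsto hs (fun t ht ↦ hderiv t ht.1) hint h0
    ((hderiv s hs).continuousAt.tendsto.mono_left nhdsWithin_le_nhds), sub_zero]

theorem intervalIntegrable_add_mul_deriv {γ₁ γ₂ : ℝ} (hs : 0 ≤ s)
    (hf : IntervalIntegrable f volume 0 s)
    (hlow : ∀ t > 0, -γ₁ * f t ≤ t * deriv f t) (hupp : ∀ t > 0, t * deriv f t ≤ -γ₂ * f t) :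
    IntervalIntegrable (fun t ↦ f t + t * deriv f t) volume 0 s := by
  rw [intervalIntegrable_iff_integrableOn_Ioc_of_le hs] at hf ⊢
  refine integrable_of_le_of_le (g₁ := fun t ↦ (1 - γ₁) * f t) (g₂ := fun t ↦ (1 - γ₂) * f t)
    (hf.aestronglyMeasurable.add (measurable_id.mul (measurable_deriv f)).aestronglyMeasurable)
    ?_ ?_ (hf.const_mul _) (hf.const_mul _)
  all_goals
    refine (ae_restrict_iff' measurableSet_Ioc).2 (.of_forall fun t ht ↦ ?_)
  · have := hlow t ht.1; dsimp only; linarith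
  · have := hupp t ht.1; dsimp only; linarith

theorem stmt7_general (f : ℝ → ℝ) (γplus γminus : ℝ)
    (hf1 : ContDiffOn ℝ 1 f (Ioi 0))
    (hfpos : ∀ s > 0, 0 < f s)
    (hγ1 : γplus < 1)
    (hlow : ∀ s > 0, -γplus * f s ≤ s * deriv f s)
    (hupp : ∀ s > 0, s * deriv f s ≤ -γminus * f s) :
    ∀ s > 0, (1 - γplus) * (∫ t in (0:ℝ)..s, f t) ≤ s * f s ∧
      s * f s ≤ (1 - γminus) * (∫ t in (0:ℝ)..s, f t) := by
  intro s hs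
  have hdiff : DifferentiableOn ℝ f (Ioi 0) := hf1.differentiableOn one_ne_zero
  have hgrowth : ∀ t ∈ Ioc 0 s, |f t| ≤ f s * s ^ γplus * t ^ (-γplus) := fun t ht ↦ by
    rw [abs_of_pos (hfpos t ht.1)]
    exact le_mul_rpow_neg_of_monotoneOn_mul_rpow
      (monotoneOn_mul_rpow_of_neg_mul_le_mul_deriv hdiff hlow) ht.1 ht.2
  have hint : IntervalIntegrable f volume 0 s :=
    intervalIntegrable_of_abs_le_rpow_neg hγ1 hs.le hdiff.continuousOn hgrowth
  have hint' := intervalIntegrable_add_mul_deriv hs.le hint hlow hupp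
  rw [← integral_add_mul_deriv_eq hs hdiff
      (tendsto_mul_nhdsGT_zero_of_abs_le_rpow_neg hγ1 hs hgrowth) hint',
    ← intervalIntegral.integral_const_mul, ← intervalIntegral.integral_const_mul]
  constructor
  · refine integral_mono_on_of_le_Ioo hs.le (hint.const_mul _) hint' fun t ht ↦ ?_
    linarith [hlow t ht.1]
  · refine integral_mono_on_of_le_Ioo hs.le hint' (hint.const_mul _) fun t ht ↦ ?_
    linarith [hupp t ht.1]

/-- Index estimate for the singular term `f` (hypothesis (H_f)): if
`-γ₊·f(s) ≤ s·f'(s) ≤ -γ₋·f(s)` for all `s > 0` with `γ₋ ≤ γ₊ < 1`, and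
`F(s) = ∫₀ˢ f`, then `(1-γ₊)·F(s) ≤ s·f(s) ≤ (1-γ₋)·F(s)` for all `s > 0`. -/
theorem stmt7 (f : ℝ → ℝ) (γplus γminus : ℝ)
    (hf1 : ContDiffOn ℝ 1 f (Ioi 0))
    (hfpos : ∀ s > 0, 0 < f s)
    (hγ : γminus ≤ γplus) (hγ1 : γplus < 1)
    (hlow : ∀ s > 0, -γplus * f s ≤ s * deriv f s)
    (hupp : ∀ s > 0, s * deriv f s ≤ -γminus * f s) :
    ∀ s > 0, (1 - γplus) * (∫ t in (0:ℝ)..s, f t) ≤ s * f s ∧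
      s * f s ≤ (1 - γminus) * (∫ t in (0:ℝ)..s, f t) :=
  stmt7_general f γplus γminus hf1 hfpos hγ1 hlow hupp
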